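/- For every integer n ≥ 0, the feedback vertex number of the Sierpiński triangle graph Ŝ_3^n equals (3^n + 1)/2, which is one third of its number of vertices: τ(Ŝ_3^n) = (3^n + 1)/2 = |V(Ŝ_3^n)|/3. -/

import Mathlib

open SimpleGraph

/-- The Sierpinski graph `S_p^n` on vertex set `P^n`: two distinct vertices are adjacent
iff they can be written as `s i j^(d-1)` and `s j i^(d-1)`. -/
def sierpinski (p n : Nat) : SimpleGraph (Fin n → Fin p) :=
  SimpleGraph.fromRel (fun u v =>
    ∃ t : Fin n, ∃ i j : Fin p, i ≠ j ∧
      (∀ k, k < t → u k = v k) ∧ u t = i ∧ v t = j ∧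
      (∀ k, t < k → u k = j ∧ v k = i))

/-- `X` is a feedback vertex set of `G` if deleting it leaves an acyclic graph. -/
def IsFeedbackVertexSet {V : Type*} (G : SimpleGraph V) (X : Set V) : Prop :=
  (G.induce Xᶜ).IsAcyclic

/-- The feedback vertex number: the minimum cardinality of a feedback vertex set. -/
noncomputable def feedbackNumber {V : Type*} (G : SimpleGraph V) : Nat :=
  sInf {k | ∃ X : Finset V, X.card = k ∧ IsFeedbackVertexSet G ↑X}

/-- The maximum number of vertices of an induced forest of `G`. -/
noncomputable def maxInducedForest {V : Type*} (G : SimpleGraph V) : Nat :=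
  sSup {k | ∃ Y : Finset V, Y.card = k ∧ (G.induce (↑Y : Set V)).IsAcyclic}

/-- The non-clique edges of `S_p^(n+1)`: edges `{s i j^l, s j i^l}` with `l ≥ 1`,
i.e. adjacency witnessed at a position `t` with `t < n`. -/
def nonCliqueRel (p n : Nat) (u v : Fin (n+1) → Fin p) : Prop :=
  ∃ t : Fin (n+1), (t : Nat) < n ∧ ∃ i j : Fin p, i ≠ j ∧
    (∀ k, k < t → u k = v k) ∧ u t = i ∧ v t = j ∧
    (∀ k, t < k → u k = j ∧ v k = i)

/-- The setoid identifying the two endpoints of every non-clique edge of `S_p^(n+1)`. -/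
def triSetoid (p n : Nat) : Setoid (Fin (n+1) → Fin p) :=
  Relation.EqvGen.setoid (nonCliqueRel p n)

/-- The generalized Sierpinski triangle graph: the contraction of all
non-clique edges of `S_p^(n+1)`. -/
def sierpinskiTriangle (p n : Nat) : SimpleGraph (Quotient (triSetoid p n)) where
  Adj x y := x ≠ y ∧ ∃ u v : Fin (n+1) → Fin p,
    Quotient.mk (triSetoid p n) u = x ∧ Quotient.mk (triSetoid p n) v = y ∧
    (sierpinski p (n+1)).Adj u v
  symm := by
    constructor
    rintro x y ⟨hxy, u, v, hu, hv, h⟩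
    exact ⟨hxy.symm, v, u, hv, hu, h.symm⟩
  loopless := by
    constructor
    rintro x ⟨hxx, -⟩
    exact hxx rfl

/-!
Contracting the non-clique edges pairs every non-constant word of `{0,1,2}^(n+1)` with exactly
one partner, while the three constant words stay alone; so `Ŝ_3^n` has `(3^(n+1) + 3) / 2`
vertices, and its edges are those of `3^n` triangles, one per prefix of length `n`. Each vertex
lies in two triangles, except the three corners, which lie in one. An induced forest meets every
triangle in at most two vertices, hence `2 |F| - 3 ≤ 2 · 3^n`, and a feedback vertex set has at
least `(3^n + 1) / 2` vertices. Conversely, gluing induced corner-to-corner paths through the three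
copies of `Ŝ_3^(n-1)` gives an induced path on `3^n + 1` vertices, whose complement is a feedback
vertex set of exactly that size.
-/

namespace SimpleGraph

variable {V : Type*} {G : SimpleGraph V}

/-- On a cycle, the two neighbours of the vertex with the largest label would share a label. -/
theorem isAcyclic_of_injective_of_adj (f : V → ℕ) (hf : Function.Injective f)
    (hadj : ∀ ⦃a b⦄, G.Adj a b → f b = f a + 1 ∨ f a = f b + 1) : G.IsAcyclic := by
  classical
  intro v c hc
  obtain ⟨u, hu, hmax⟩ := c.support.toFinset.exists_max_image f ⟨v, by simp⟩
  rw [List.mem_toFinset] at hu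
  set c' := c.rotate u hu
  have hc' : c'.IsCycle := hc.rotate hu
  have below : ∀ w, G.Adj u w → w ∈ c'.support → f w + 1 = f u := by
    intro w huw hw
    have hle : f w ≤ f u :=
      hmax w (List.mem_toFinset.mpr ((c.mem_support_rotate_iff u hu).mp hw))
    have hne : f w ≠ f u := fun h => huw.ne (hf h).symm
    rcases hadj huw with h | h <;> omega
  have hsnd := below _ (c'.adj_snd hc'.not_nil) (c'.getVert_mem_support 1)
  have hpen := below _ (c'.adj_penultimate hc'.not_nil).symm (c'.getVert_mem_support _)
  exact hc'.snd_ne_penultimate (hf (by omega))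

structure IsInducedPathSeq (G : SimpleGraph V) (g : ℕ → V) (N : ℕ) : Prop where
  injOn : Set.InjOn g (Set.Iic N)
  adj_iff : ∀ ⦃k l⦄, k ≤ N → l ≤ N → (G.Adj (g k) (g l) ↔ l = k + 1 ∨ k = l + 1)

theorem IsInducedPathSeq.isAcyclic_induce {g : ℕ → V} {N : ℕ} (h : IsInducedPathSeq G g N) :
    (G.induce (g '' Set.Iic N)).IsAcyclic := by
  have index_spec (a : g '' Set.Iic N) :
      Function.invFunOn g (Set.Iic N) a ≤ N ∧ g (Function.invFunOn g (Set.Iic N) a) = a :=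
    ⟨Function.invFunOn_mem a.2, Function.invFunOn_eq a.2⟩
  refine isAcyclic_of_injective_of_adj (fun a => Function.invFunOn g (Set.Iic N) a) ?_ ?_
  · intro a b hab
    exact Subtype.ext <| by rw [← (index_spec a).2, ← (index_spec b).2]; exact congrArg g hab
  · intro a b hab
    rw [induce_adj, ← (index_spec a).2, ← (index_spec b).2] at hab
    exact (h.adj_iff (index_spec a).1 (index_spec b).1).mp hab

def seqAppend (g₁ g₂ : ℕ → V) (N : ℕ) (k : ℕ) : V := if k ≤ N then g₁ k else g₂ (k - N)

theorem seqAppend_of_le {g₁ g₂ : ℕ → V} {N k : ℕ} (hk : k ≤ N) : seqAppend g₁ g₂ N k = g₁ k :=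
  if_pos hk

theorem seqAppend_of_lt {g₁ g₂ : ℕ → V} {N k : ℕ} (hk : N < k) :
    seqAppend g₁ g₂ N k = g₂ (k - N) :=
  if_neg (Nat.not_le.mpr hk)

theorem IsInducedPathSeq.append {g₁ g₂ : ℕ → V} {N₁ N₂ : ℕ}
    (h₁ : IsInducedPathSeq G g₁ N₁) (h₂ : IsInducedPathSeq G g₂ N₂) (hglue : g₁ N₁ = g₂ 0)
    (heq : ∀ ⦃k l⦄, k ≤ N₁ → l ≤ N₂ → g₁ k = g₂ l → k = N₁ ∧ l = 0)
    (hadj : ∀ ⦃k l⦄, k ≤ N₁ → l ≤ N₂ → G.Adj (g₁ k) (g₂ l) → k = N₁ ∨ l = 0) :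
    IsInducedPathSeq G (seqAppend g₁ g₂ N₁) (N₁ + N₂) := by
  have mixed_ne : ∀ ⦃k l⦄, k ≤ N₁ → N₁ < l → l ≤ N₁ + N₂ → g₁ k ≠ g₂ (l - N₁) :=
    fun k l hk hl hl' he => by have := heq hk (by omega) he; omega
  have mixed_adj : ∀ ⦃k l⦄, k ≤ N₁ → N₁ < l → l ≤ N₁ + N₂ →
      (G.Adj (g₁ k) (g₂ (l - N₁)) ↔ l = k + 1) := by
    intro k l hk hl hl'
    rcases hk.lt_or_eq with hk | rfl
    · refine ⟨fun h => ?_, fun h => by omega⟩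
      have := hadj hk.le (by omega) h
      omega
    · rw [hglue, h₂.adj_iff (Nat.zero_le _) (by omega)]
      omega
  constructor
  · intro k hk l hl he
    simp only [Set.mem_Iic] at hk hl
    unfold seqAppend at he
    split_ifs at he with hk₁ hl₁ hl₁
    · exact h₁.injOn (Set.mem_Iic.mpr hk₁) (Set.mem_Iic.mpr hl₁) he
    · exact absurd he (mixed_ne hk₁ (by omega) hl)
    · exact absurd he.symm (mixed_ne hl₁ (by omega) hk)
    · have := h₂.injOn (Set.mem_Iic.mpr (by omega : k - N₁ ≤ N₂))
        (Set.mem_Iic.mpr (by omega : l - N₁ ≤ N₂)) he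
      omega
  · intro k l hk hl
    unfold seqAppend
    split_ifs with hk₁ hl₁ hl₁
    · exact h₁.adj_iff hk₁ hl₁
    · rw [mixed_adj hk₁ (by omega) hl]; omega
    · rw [G.adj_comm, mixed_adj hl₁ (by omega) hk]; omega
    · rw [h₂.adj_iff (by omega) (by omega)]; omega

end SimpleGraph

theorem feedbackNumber_eq_card {V : Type*} {G : SimpleGraph V} {X : Finset V}
    (hX : IsFeedbackVertexSet G X)
    (hmin : ∀ Y : Finset V, IsFeedbackVertexSet G Y → X.card ≤ Y.card) :
    feedbackNumber G = X.card :=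
  IsLeast.csInf_eq ⟨⟨X, rfl, hX⟩, by rintro _ ⟨Y, rfl, hY⟩; exact hmin Y hY⟩

theorem Fin.init_cons {α : Type*} {n : ℕ} (d : α) (u : Fin (n + 1) → α) :
    Fin.init (Fin.cons d u : Fin (n + 2) → α) = Fin.cons d (Fin.init u) := by
  funext k
  refine Fin.cases ?_ (fun k => ?_) k
  · rfl
  · simp only [Fin.init, Fin.cons_succ]
    rw [← Fin.succ_castSucc, Fin.cons_succ]

theorem Fin.cons_const {α : Type*} {n : ℕ} (a : α) :
    (Fin.cons a fun _ => a : Fin (n + 1) → α) = fun _ => a := by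
  funext k
  induction k using Fin.cases <;> rfl

namespace SierpinskiTriangle

open Finset

variable {p n : ℕ}

abbrev Word (p n : ℕ) := Fin (n + 1) → Fin p

abbrev Vertex (p n : ℕ) := Quotient (triSetoid p n)

def mk (u : Word p n) : Vertex p n := Quotient.mk _ u

theorem nonCliqueRel_symm {u v : Word p n} (h : nonCliqueRel p n u v) : nonCliqueRel p n v u := by
  obtain ⟨t, ht, i, j, hij, hlt, hut, hvt, hgt⟩ := h
  exact ⟨t, ht, j, i, hij.symm, fun k hk => (hlt k hk).symm, hvt, hut,
    fun k hk => (hgt k hk).symm⟩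

theorem ne_of_nonCliqueRel {u v : Word p n} (h : nonCliqueRel p n u v) : u ≠ v := by
  obtain ⟨t, -, i, j, hij, -, hut, hvt, -⟩ := h
  rintro rfl
  exact hij (hut.symm.trans hvt)

theorem not_nonCliqueRel_const (c : Fin p) (v : Word p n) : ¬ nonCliqueRel p n (fun _ => c) v := by
  rintro ⟨t, ht, i, j, hij, -, hut, -, hgt⟩
  exact hij (hut.symm.trans (hgt ⟨t + 1, by omega⟩ (Fin.lt_def.mpr (by simp))).1)

theorem not_nonCliqueRel_of_init_eq {u v : Word p n} (h : Fin.init u = Fin.init v) :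
    ¬ nonCliqueRel p n u v := by
  rintro ⟨t, ht, i, j, hij, -, hut, hvt, -⟩
  have := congrFun h ⟨t, ht⟩
  simp only [Fin.init, Fin.castSucc_mk, Fin.eta] at this
  exact hij (by rw [← hut, ← hvt, this])

theorem nonCliqueRel_cons {u v : Word p n} (d : Fin p) (h : nonCliqueRel p n u v) :
    nonCliqueRel p (n + 1) (Fin.cons d u) (Fin.cons d v) := by
  obtain ⟨t, ht, i, j, hij, hlt, hut, hvt, hgt⟩ := h
  refine ⟨t.succ, by simpa using ht, i, j, hij, fun k hk => ?_, by simpa using hut,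
    by simpa using hvt, fun k hk => ?_⟩
  · induction k using Fin.cases with
    | zero => rfl
    | succ k => simpa using hlt k (Fin.succ_lt_succ_iff.mp hk)
  · induction k using Fin.cases with
    | zero => exact absurd hk (Fin.not_lt_zero _)
    | succ k => simpa using hgt k (Fin.succ_lt_succ_iff.mp hk)

theorem nonCliqueRel_cons_const {d e : Fin p} (hde : d ≠ e) :
    nonCliqueRel p (n + 1) (Fin.cons d fun _ => e) (Fin.cons e fun _ => d) := by
  refine ⟨0, by simp, d, e, hde, fun k hk => absurd hk (Fin.not_lt_zero _), rfl, rfl,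
    fun k hk => ?_⟩
  induction k using Fin.cases with
  | zero => exact absurd hk (lt_irrefl _)
  | succ k => simp

/-- Either an edge inside the copy `d`, or the edge by which the copies `d` and `e` are glued. -/
theorem nonCliqueRel_cons_iff {d : Fin p} {u : Word p n} {w : Word p (n + 1)} :
    nonCliqueRel p (n + 1) (Fin.cons d u) w ↔
      (∃ w', w = Fin.cons d w' ∧ nonCliqueRel p n u w') ∨
      (∃ e, e ≠ d ∧ u = (fun _ => e) ∧ w = Fin.cons e fun _ => d) := by
  refine ⟨fun h => ?_, ?_⟩
  · obtain ⟨t, ht, i, j, hij, hlt, hut, hvt, hgt⟩ := h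
    induction t using Fin.cases with
    | zero =>
      obtain rfl : d = i := hut
      refine Or.inr ⟨j, hij.symm, funext fun k => ?_, ?_⟩
      · simpa using (hgt k.succ (Fin.succ_pos k)).1
      · rw [← Fin.cons_self_tail w, hvt]
        congr 1
        funext k
        exact (hgt k.succ (Fin.succ_pos k)).2
    | succ t =>
      refine Or.inl ⟨Fin.tail w, ?_, t, by simpa using ht, i, j, hij, fun k hk => ?_,
        by simpa using hut, hvt, fun k hk => ?_⟩
      · rw [← Fin.cons_self_tail w, ← hlt 0 (Fin.succ_pos t)]
        rfl
      · simpa [Fin.tail] using hlt k.succ (Fin.succ_lt_succ_iff.mpr hk)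
      · simpa [Fin.tail] using hgt k.succ (Fin.succ_lt_succ_iff.mpr hk)
  · rintro (⟨w', rfl, h⟩ | ⟨e, hed, rfl, rfl⟩)
    · exact nonCliqueRel_cons d h
    · exact nonCliqueRel_cons_const hed.symm

theorem nonCliqueRel_unique {u v w : Word p n} (hv : nonCliqueRel p n u v)
    (hw : nonCliqueRel p n u w) : v = w := by
  induction n with
  | zero => exact absurd hv (fun ⟨t, ht, _⟩ => by omega)
  | succ n ih =>
    rw [← Fin.cons_self_tail u] at hv hw
    rcases nonCliqueRel_cons_iff.mp hv with ⟨v', rfl, hv'⟩ | ⟨e, -, hu, rfl⟩ <;>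
    rcases nonCliqueRel_cons_iff.mp hw with ⟨w', rfl, hw'⟩ | ⟨e', -, hu', rfl⟩
    · rw [ih hv' hw']
    · exact absurd (hu' ▸ hv') (not_nonCliqueRel_const _ _)
    · exact absurd (hu ▸ hw') (not_nonCliqueRel_const _ _)
    · rw [show e = e' from congrFun (hu.symm.trans hu') 0]

theorem exists_nonCliqueRel {u : Word p n} (hu : ∀ c, u ≠ fun _ => c) :
    ∃ v, nonCliqueRel p n u v := by
  induction n with
  | zero => exact absurd (funext fun k => congrArg u (Fin.fin_one_eq_zero k)) (hu (u 0))
  | succ n ih =>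
    rw [← Fin.cons_self_tail u] at hu ⊢
    by_cases htail : ∃ e, Fin.tail u = fun _ => e
    · obtain ⟨e, he⟩ := htail
      have hde : u 0 ≠ e := by
        rintro hde
        apply hu e
        rw [he, hde, Fin.cons_const]
      exact ⟨_, he ▸ nonCliqueRel_cons_const hde⟩
    · push Not at htail
      obtain ⟨v, hv⟩ := ih htail
      exact ⟨_, nonCliqueRel_cons _ hv⟩

theorem eqvGen_nonCliqueRel_iff {u v : Word p n} :
    Relation.EqvGen (nonCliqueRel p n) u v ↔ u = v ∨ nonCliqueRel p n u v := by
  refine ⟨fun h => ?_, ?_⟩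
  · induction h with
    | rel _ _ h => exact Or.inr h
    | refl => exact Or.inl rfl
    | symm _ _ _ ih => exact ih.imp Eq.symm nonCliqueRel_symm
    | trans _ _ _ _ _ ih₁ ih₂ =>
      rcases ih₁ with rfl | h₁
      · exact ih₂
      · rcases ih₂ with rfl | h₂
        · exact Or.inr h₁
        · exact Or.inl (nonCliqueRel_unique (nonCliqueRel_symm h₁) h₂)
  · rintro (rfl | h)
    · exact .refl _
    · exact .rel _ _ h

theorem mk_eq_mk_iff {u v : Word p n} : mk u = mk v ↔ u = v ∨ nonCliqueRel p n u v :=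
  Quotient.eq.trans eqvGen_nonCliqueRel_iff

theorem mk_surjective : Function.Surjective (mk : Word p n → Vertex p n) :=
  Quotient.mk_surjective

instance : DecidableRel (nonCliqueRel p n) := fun u v => by
  unfold nonCliqueRel; infer_instance

instance : DecidableEq (Vertex p n) := fun x y =>
  Quotient.recOnSubsingleton₂ x y fun _ _ => decidable_of_iff _ mk_eq_mk_iff.symm

instance : Fintype (Vertex p n) := Fintype.ofSurjective mk mk_surjective

def corner (n : ℕ) (c : Fin p) : Vertex p n := mk fun _ => c

theorem mk_eq_corner_iff {u : Word p n} {c : Fin p} : mk u = corner n c ↔ u = fun _ => c := by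
  refine ⟨fun h => ?_, fun h => h ▸ rfl⟩
  rcases mk_eq_mk_iff.mp h.symm with h | h
  · exact h.symm
  · exact absurd h (not_nonCliqueRel_const _ _)

theorem corner_injective (n : ℕ) : Function.Injective (corner n : Fin p → Vertex p n) :=
  fun _ _ h => congrFun (mk_eq_corner_iff.mp h) 0

theorem init_eq_or_nonCliqueRel {u v : Word p n} (h : (sierpinski p (n + 1)).Adj u v) :
    Fin.init u = Fin.init v ∨ nonCliqueRel p n u v := by
  have key : ∀ u v : Word p n, (∃ t : Fin (n + 1), ∃ i j : Fin p, i ≠ j ∧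
      (∀ k, k < t → u k = v k) ∧ u t = i ∧ v t = j ∧ (∀ k, t < k → u k = j ∧ v k = i)) →
      Fin.init u = Fin.init v ∨ nonCliqueRel p n u v := by
    rintro u v ⟨t, i, j, hij, hlt, hut, hvt, hgt⟩
    by_cases ht : (t : ℕ) < n
    · exact Or.inr ⟨t, ht, i, j, hij, hlt, hut, hvt, hgt⟩
    · exact Or.inl (funext fun k => hlt _ (Fin.lt_def.mpr (by simp; omega)))
  rcases (SimpleGraph.fromRel_adj _ _ _).mp h with ⟨-, h | h⟩
  · exact key u v h
  · exact (key v u h).imp Eq.symm nonCliqueRel_symm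

theorem adj_iff {x y : Vertex p n} :
    (sierpinskiTriangle p n).Adj x y ↔
      x ≠ y ∧ ∃ u v, mk u = x ∧ mk v = y ∧ Fin.init u = Fin.init v := by
  refine ⟨fun ⟨hxy, u, v, hu, hv, h⟩ => ⟨hxy, u, v, hu, hv, ?_⟩, ?_⟩
  · refine (init_eq_or_nonCliqueRel h).resolve_right fun hr => hxy ?_
    rw [← hu, ← hv]
    exact mk_eq_mk_iff.mpr (Or.inr hr)
  · rintro ⟨hxy, u, v, rfl, rfl, h⟩
    have hlast : u (Fin.last n) ≠ v (Fin.last n) := fun he =>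
      hxy (congrArg mk (by rw [← Fin.snoc_init_self u, ← Fin.snoc_init_self v, h, he]))
    refine ⟨hxy, u, v, rfl, rfl, (SimpleGraph.fromRel_adj _ _ _).mpr
      ⟨fun he => hlast (by rw [he]), Or.inl ⟨Fin.last n, _, _, hlast, fun k hk => ?_, rfl, rfl,
        fun k hk => absurd hk (Fin.le_last k).not_gt⟩⟩⟩
    simpa [Fin.init] using congrFun h (k.castPred hk.ne)

theorem adj_mk_mk {u v : Word p n} (h : Fin.init u = Fin.init v) (huv : u ≠ v) :
    (sierpinskiTriangle p n).Adj (mk u) (mk v) :=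
  adj_iff.mpr ⟨fun he => (mk_eq_mk_iff.mp he).elim huv (not_nonCliqueRel_of_init_eq h),
    u, v, rfl, rfl, h⟩

def cons (d : Fin p) : Vertex p n → Vertex p (n + 1) :=
  Quotient.lift (fun u => mk (Fin.cons d u)) fun _ _ h =>
    mk_eq_mk_iff.mpr ((mk_eq_mk_iff.mp (Quotient.sound h)).imp (congrArg _) (nonCliqueRel_cons d))

theorem cons_mk (d : Fin p) (u : Word p n) : cons d (mk u) = mk (Fin.cons d u) := rfl

theorem cons_corner_self (d : Fin p) : cons d (corner n d) = corner (n + 1) d := by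
  rw [corner, cons_mk, Fin.cons_const]
  rfl

theorem cons_corner_comm {d e : Fin p} (hde : d ≠ e) :
    cons d (corner n e) = cons e (corner n d) :=
  mk_eq_mk_iff.mpr (Or.inr (nonCliqueRel_cons_const hde))

theorem cons_eq_mk_iff {d : Fin p} {a : Vertex p n} {w : Word p (n + 1)} :
    cons d a = mk w ↔ (∃ u, w = Fin.cons d u ∧ mk u = a) ∨
      (∃ e, e ≠ d ∧ a = corner n e ∧ w = Fin.cons e fun _ => d) := by
  obtain ⟨u, rfl⟩ := mk_surjective a
  rw [cons_mk, mk_eq_mk_iff, nonCliqueRel_cons_iff]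
  constructor
  · rintro (rfl | ⟨w', rfl, h⟩ | ⟨e, hed, rfl, rfl⟩)
    · exact Or.inl ⟨u, rfl, rfl⟩
    · exact Or.inl ⟨w', rfl, (mk_eq_mk_iff.mpr (Or.inr h)).symm⟩
    · exact Or.inr ⟨e, hed, rfl, rfl⟩
  · rintro (⟨u', rfl, h⟩ | ⟨e, hed, h, rfl⟩)
    · rcases mk_eq_mk_iff.mp h with rfl | h
      · exact Or.inl rfl
      · exact Or.inr (Or.inl ⟨u', rfl, nonCliqueRel_symm h⟩)
    · exact Or.inr (Or.inr ⟨e, hed, mk_eq_corner_iff.mp h, rfl⟩)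

theorem cons_injective (d : Fin p) :
    Function.Injective (cons d : Vertex p n → Vertex p (n + 1)) := by
  intro a b h
  obtain ⟨v, rfl⟩ := mk_surjective b
  rcases cons_eq_mk_iff.mp h with ⟨u, hu, rfl⟩ | ⟨e, hed, -, he⟩
  · obtain rfl := Fin.cons_right_injective (α := fun _ => Fin p) d hu
    rfl
  · exact absurd (congrFun he 0).symm hed

theorem eq_corner_of_cons_eq_cons {d e : Fin p} {a b : Vertex p n} (hde : d ≠ e)
    (h : cons d a = cons e b) : a = corner n e ∧ b = corner n d := by
  obtain ⟨v, rfl⟩ := mk_surjective b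
  rcases cons_eq_mk_iff.mp h with ⟨u, hu, -⟩ | ⟨e', -, ha, he⟩
  · exact absurd (congrFun hu 0) hde.symm
  · obtain ⟨rfl, rfl⟩ := Fin.cons_inj.mp he
    exact ⟨ha, rfl⟩

theorem adj_cons_cons_iff {d : Fin p} {a b : Vertex p n} :
    (sierpinskiTriangle p (n + 1)).Adj (cons d a) (cons d b) ↔
      (sierpinskiTriangle p n).Adj a b := by
  refine ⟨fun h => ?_, fun h => ?_⟩
  · obtain ⟨hab, u, v, hu, hv, hinit⟩ := adj_iff.mp h
    rw [← Fin.cons_self_tail u, ← Fin.cons_self_tail v, Fin.init_cons, Fin.init_cons,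
      Fin.cons_inj] at hinit
    rcases cons_eq_mk_iff.mp hu.symm with ⟨u', rfl, rfl⟩ | ⟨e, hed, -, rfl⟩ <;>
    rcases cons_eq_mk_iff.mp hv.symm with ⟨v', rfl, rfl⟩ | ⟨e', hed', -, rfl⟩
    · exact adj_iff.mpr ⟨fun he => hab (he ▸ rfl), u', v', rfl, rfl, by simpa using hinit.2⟩
    · exact absurd (by simpa using hinit.1) hed'.symm
    · exact absurd (by simpa using hinit.1) hed
    · obtain rfl : e = e' := by simpa using hinit.1
      exact absurd (hu.symm.trans hv) hab
  · obtain ⟨hab, u, v, rfl, rfl, hinit⟩ := adj_iff.mp h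
    exact adj_iff.mpr ⟨(cons_injective d).ne hab, _, _, cons_mk d u, cons_mk d v,
      by rw [Fin.init_cons, Fin.init_cons, hinit]⟩

/-- The last case only occurs for `n = 0`. -/
theorem eq_corner_of_adj_cons_cons {d e : Fin p} {a b : Vertex p n} (hde : d ≠ e)
    (h : (sierpinskiTriangle p (n + 1)).Adj (cons d a) (cons e b)) :
    b = corner n d ∨ a = corner n e ∨ ∃ c, c ≠ d ∧ c ≠ e ∧ a = corner n c ∧ b = corner n c := by
  obtain ⟨-, u, v, hu, hv, hinit⟩ := adj_iff.mp h
  rw [← Fin.cons_self_tail u, ← Fin.cons_self_tail v, Fin.init_cons, Fin.init_cons,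
    Fin.cons_inj] at hinit
  rcases cons_eq_mk_iff.mp hu.symm with ⟨u', rfl, -⟩ | ⟨c, hcd, ha, rfl⟩ <;>
  rcases cons_eq_mk_iff.mp hv.symm with ⟨v', rfl, -⟩ | ⟨c', hce, hb, rfl⟩
  · exact absurd (by simpa using hinit.1) hde
  · obtain rfl : d = c' := by simpa using hinit.1
    exact Or.inl hb
  · obtain rfl : c = e := by simpa using hinit.1
    exact Or.inr (Or.inl ha)
  · obtain rfl : c = c' := by simpa using hinit.1
    exact Or.inr (Or.inr ⟨c, hcd, hce, ha, hb⟩)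

def fiber (x : Vertex p n) : Finset (Word p n) := {u | mk u = x}

def corners (p n : ℕ) : Finset (Vertex p n) := univ.image (corner n)

theorem card_corners : #(corners p n) = p := by
  rw [corners, card_image_of_injective _ (corner_injective n), card_univ, Fintype.card_fin]

theorem card_fiber_corner (c : Fin p) : #(fiber (corner n c)) = 1 :=
  card_eq_one.mpr ⟨fun _ => c, by ext u; simp [fiber, mk_eq_corner_iff]⟩

theorem card_fiber_of_notMem_corners {x : Vertex p n} (hx : x ∉ corners p n) :
    #(fiber x) = 2 := by
  obtain ⟨u, rfl⟩ := mk_surjective x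
  obtain ⟨v, hv⟩ := exists_nonCliqueRel (u := u) fun c h =>
    hx (mem_image.mpr ⟨c, mem_univ _, by rw [h]; rfl⟩)
  refine card_eq_two.mpr ⟨u, v, ne_of_nonCliqueRel hv, ?_⟩
  ext w
  simp only [fiber, mem_filter, mem_univ, true_and, mem_insert, mem_singleton, mk_eq_mk_iff]
  refine or_congr Iff.rfl ⟨fun h => nonCliqueRel_unique hv (nonCliqueRel_symm h) |>.symm, ?_⟩
  rintro rfl
  exact nonCliqueRel_symm hv

/-- Corners have one representative word and all other vertices two. -/
theorem sum_card_fiber_add_card_corners (F : Finset (Vertex p n)) :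
    ∑ x ∈ F, #(fiber x) + #{x ∈ F | x ∈ corners p n} = 2 * #F := by
  rw [card_filter, ← sum_add_distrib, mul_comm, ← smul_eq_mul, ← sum_const]
  refine sum_congr rfl fun x _ => ?_
  split_ifs with hx
  · obtain ⟨c, -, rfl⟩ := mem_image.mp hx
    rw [card_fiber_corner]
  · rw [card_fiber_of_notMem_corners hx]

theorem sum_card_fiber (F : Finset (Vertex p n)) :
    ∑ x ∈ F, #(fiber x) = #{u | mk u ∈ F} := by
  rw [card_eq_sum_card_fiberwise (s := ({u | mk u ∈ F} : Finset (Word p n))) (t := F) (f := mk)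
    fun u hu => by simpa using hu]
  refine sum_congr rfl fun x hx => congrArg card ?_
  ext u
  simp only [fiber, mem_filter, mem_univ, true_and]
  exact ⟨fun h => ⟨h ▸ hx, h⟩, And.right⟩

theorem two_mul_card_vertex (p n : ℕ) : 2 * Nat.card (Vertex p n) = p ^ (n + 1) + p := by
  rw [Nat.card_eq_fintype_card]
  have h := sum_card_fiber_add_card_corners (univ : Finset (Vertex p n))
  simp only [sum_card_fiber, mem_univ, filter_true, filter_mem_eq_inter, univ_inter,
    card_corners, card_univ, Fintype.card_fun, Fintype.card_fin] at h
  omega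

theorem card_filter_mk_snoc_mem_le_two {F : Finset (Vertex p n)}
    (hF : ((sierpinskiTriangle p n).induce (F : Set (Vertex p n))).IsAcyclic) (s : Fin n → Fin p) :
    #{i | mk (Fin.snoc s i : Word p n) ∈ F} ≤ 2 := by
  by_contra! h
  obtain ⟨a, b, c, ha, hb, hc, hab, hac, hbc⟩ := two_lt_card_iff.mp h
  simp only [mem_filter, mem_univ, true_and] at ha hb hc
  have adj : ∀ {i j : Fin p}, i ≠ j →
      (sierpinskiTriangle p n).Adj (mk (Fin.snoc s i : Word p n)) (mk (Fin.snoc s j)) :=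
    fun hij => adj_mk_mk (by rw [Fin.init_snoc, Fin.init_snoc])
      fun he => hij (by simpa using congrFun he (Fin.last n))
  exact hF.cliqueFree le_rfl {⟨_, ha⟩, ⟨_, hb⟩, ⟨_, hc⟩}
    (is3Clique_triple_iff.mpr ⟨induce_adj.mpr (adj hab), induce_adj.mpr (adj hac),
      induce_adj.mpr (adj hbc)⟩)

/-- An induced forest contains at most two vertices of each of the `p ^ n` cliques. -/
theorem card_filter_mk_mem_le {F : Finset (Vertex p n)}
    (hF : ((sierpinskiTriangle p n).induce (F : Set (Vertex p n))).IsAcyclic) :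
    #{u | mk u ∈ F} ≤ 2 * p ^ n := by
  rw [card_eq_sum_card_fiberwise (f := Fin.init) (t := univ) fun _ _ => mem_coe.mpr (mem_univ _)]
  calc ∑ s, #{u ∈ {u | mk u ∈ F} | Fin.init u = s}
      ≤ ∑ _s : Fin n → Fin p, 2 := by
        refine sum_le_sum fun s _ => le_trans (card_le_card_of_injOn (· (Fin.last n)) ?_ ?_)
          (card_filter_mk_snoc_mem_le_two hF s)
        · intro u hu
          simp only [coe_filter, mem_filter, mem_univ, true_and, Set.mem_ofPred_eq] at hu ⊢
          rw [← hu.2, Fin.snoc_init_self]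
          exact hu.1
        · intro u hu v hv he
          simp only [coe_filter, mem_filter, mem_univ, true_and, Set.mem_ofPred_eq] at hu hv
          rw [← Fin.snoc_init_self u, ← Fin.snoc_init_self v, hu.2, hv.2]
          exact congrArg _ he
    _ = 2 * p ^ n := by simp [mul_comm]

theorem two_mul_card_le_of_isAcyclic {F : Finset (Vertex p n)}
    (hF : ((sierpinskiTriangle p n).induce (F : Set (Vertex p n))).IsAcyclic) :
    2 * #F ≤ 2 * p ^ n + p := by
  have hcorners : #{x ∈ F | x ∈ corners p n} ≤ p :=
    (card_le_card fun x hx => (mem_filter.mp hx).2).trans card_corners.le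
  have := card_filter_mk_mem_le hF
  rw [← sum_card_fiber_add_card_corners, sum_card_fiber]
  omega

theorem pow_succ_le_of_isFeedbackVertexSet {X : Finset (Vertex p n)}
    (hX : IsFeedbackVertexSet (sierpinskiTriangle p n) X) : p ^ (n + 1) ≤ 2 * #X + 2 * p ^ n := by
  have hF := two_mul_card_le_of_isAcyclic (F := Xᶜ) (by rwa [coe_compl])
  have := card_add_card_compl X
  have := two_mul_card_vertex p n
  rw [Nat.card_eq_fintype_card] at this
  omega

theorem _root_.SimpleGraph.IsInducedPathSeq.cons {g : ℕ → Vertex p n}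
    {N : ℕ} (h : IsInducedPathSeq (sierpinskiTriangle p n) g N) (d : Fin p) :
    IsInducedPathSeq (sierpinskiTriangle p (n + 1)) (fun k => cons d (g k)) N :=
  ⟨(cons_injective d).comp_injOn h.injOn,
    fun _ _ hk hl => adj_cons_cons_iff.trans (h.adj_iff hk hl)⟩

section Path

variable {x y z : Fin 3}

theorem eq_or_eq_or_eq_of_ne (c : Fin 3) (hxy : x ≠ y) (hxz : x ≠ z) (hyz : y ≠ z) :
    c = x ∨ c = y ∨ c = z := by
  revert c x y z; decide

/-- An induced path of `Ŝ_3^n` from the corner `x` to the corner `y` avoiding the corner `z`. -/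
def path : (n : ℕ) → Fin 3 → Fin 3 → Fin 3 → ℕ → Vertex 3 n
  | 0, x, y, _ => fun k => if k = 0 then corner 0 x else corner 0 y
  | n + 1, x, y, z =>
    seqAppend
      (seqAppend (fun k => cons x (path n x z y k)) (fun k => cons z (path n x y z k)) (3 ^ n))
      (fun k => cons y (path n z y x k)) (2 * 3 ^ n)

theorem path_apply_zero (n : ℕ) (x y z : Fin 3) : path n x y z 0 = corner n x := by
  induction n generalizing x y z with
  | zero => rfl
  | succ n ih =>
    rw [path, seqAppend_of_le (Nat.zero_le _), seqAppend_of_le (Nat.zero_le _), ih,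
      cons_corner_self]

theorem path_apply_pow (n : ℕ) (x y z : Fin 3) : path n x y z (3 ^ n) = corner n y := by
  induction n generalizing x y z with
  | zero => rfl
  | succ n ih =>
    have hpos : 0 < 3 ^ n := by positivity
    rw [path, seqAppend_of_lt (by rw [pow_succ]; omega),
      show 3 ^ (n + 1) - 2 * 3 ^ n = 3 ^ n by rw [pow_succ]; omega, ih, cons_corner_self]

theorem path_ne_corner (hxz : x ≠ z) (hyz : y ≠ z) (k : ℕ) : path n x y z k ≠ corner n z := by
  induction n generalizing x y z k with
  | zero =>
    simp only [path]
    split_ifs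
    exacts [(corner_injective 0).ne hxz, (corner_injective 0).ne hyz]
  | succ n ih =>
    rw [path, ← cons_corner_self]
    unfold seqAppend
    split_ifs
    · exact fun h => hxz ((corner_injective n) (eq_corner_of_cons_eq_cons hxz h).2).symm
    · exact fun h => ih hxz hyz _ (cons_injective z h)
    · exact fun h => hyz ((corner_injective n) (eq_corner_of_cons_eq_cons hyz h).2).symm

theorem path_eq_corner_left_iff {k : ℕ}
    (h : IsInducedPathSeq (sierpinskiTriangle 3 n) (path n x y z) (3 ^ n)) (hk : k ≤ 3 ^ n) :
    path n x y z k = corner n x ↔ k = 0 := by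
  rw [← path_apply_zero n x y z]
  exact h.injOn.eq_iff hk (Nat.zero_le _)

theorem path_eq_corner_right_iff {k : ℕ}
    (h : IsInducedPathSeq (sierpinskiTriangle 3 n) (path n x y z) (3 ^ n)) (hk : k ≤ 3 ^ n) :
    path n x y z k = corner n y ↔ k = 3 ^ n := by
  rw [← path_apply_pow n x y z]
  exact h.injOn.eq_iff hk (Set.mem_Iic.mpr le_rfl)

theorem isInducedPathSeq_path_zero (hxy : x ≠ y) :
    IsInducedPathSeq (sierpinskiTriangle 3 0) (path 0 x y z) (3 ^ 0) := by
  have hadj : (sierpinskiTriangle 3 0).Adj (corner 0 x) (corner 0 y) :=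
    adj_mk_mk (Subsingleton.elim _ _) fun h => hxy (congrFun h 0)
  refine ⟨fun k hk l hl h => ?_, fun k l hk hl => ?_⟩
  · simp only [pow_zero, Set.mem_Iic] at hk hl
    interval_cases k <;> interval_cases l <;> simp_all [path, (corner_injective 0).ne hxy]
  · rw [pow_zero] at hk hl
    interval_cases k <;> interval_cases l <;> simp [path, hadj, hadj.symm]

theorem isInducedPathSeq_seqAppend_cons_path (hxy : x ≠ y) (hxz : x ≠ z) (hyz : y ≠ z)
    (h₁ : IsInducedPathSeq (sierpinskiTriangle 3 n) (path n x z y) (3 ^ n))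
    (h₂ : IsInducedPathSeq (sierpinskiTriangle 3 n) (path n x y z) (3 ^ n)) :
    IsInducedPathSeq (sierpinskiTriangle 3 (n + 1))
      (seqAppend (fun k => cons x (path n x z y k)) (fun k => cons z (path n x y z k)) (3 ^ n))
      (2 * 3 ^ n) := by
  rw [two_mul]
  refine (h₁.cons x).append (h₂.cons z) ?_ (fun k l hk hl h => ?_) (fun k l hk hl h => ?_)
  · rw [path_apply_pow, path_apply_zero, cons_corner_comm hxz]
  · obtain ⟨h₁k, h₂l⟩ := eq_corner_of_cons_eq_cons hxz h
    exact ⟨(path_eq_corner_right_iff h₁ hk).mp h₁k, (path_eq_corner_left_iff h₂ hl).mp h₂l⟩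
  · rcases eq_corner_of_adj_cons_cons hxz h with h₂l | h₁k | ⟨c, hcx, hcz, h₁k, -⟩
    · exact Or.inr ((path_eq_corner_left_iff h₂ hl).mp h₂l)
    · exact Or.inl ((path_eq_corner_right_iff h₁ hk).mp h₁k)
    · obtain rfl : c = y := by have := eq_or_eq_or_eq_of_ne c hxy hxz hyz; tauto
      exact absurd h₁k (path_ne_corner hxy hyz.symm k)

theorem isInducedPathSeq_path_succ (hxy : x ≠ y) (hxz : x ≠ z) (hyz : y ≠ z)
    (h₁ : IsInducedPathSeq (sierpinskiTriangle 3 n) (path n x z y) (3 ^ n))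
    (h₂ : IsInducedPathSeq (sierpinskiTriangle 3 n) (path n x y z) (3 ^ n))
    (h₃ : IsInducedPathSeq (sierpinskiTriangle 3 n) (path n z y x) (3 ^ n)) :
    IsInducedPathSeq (sierpinskiTriangle 3 (n + 1)) (path (n + 1) x y z) (3 ^ (n + 1)) := by
  have hpos : 0 < 3 ^ n := by positivity
  rw [show 3 ^ (n + 1) = 2 * 3 ^ n + 3 ^ n by ring]
  refine (isInducedPathSeq_seqAppend_cons_path hxy hxz hyz h₁ h₂).append (h₃.cons y) ?_
    (fun k l hk hl h => ?_) (fun k l hk hl h => ?_)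
  · rw [seqAppend_of_lt (by omega), show 2 * 3 ^ n - 3 ^ n = 3 ^ n by omega, path_apply_pow,
      path_apply_zero, cons_corner_comm hyz.symm]
  · unfold seqAppend at h
    split_ifs at h with hk₁
    · exact absurd (eq_corner_of_cons_eq_cons hxy h).1 (path_ne_corner hxy hyz.symm k)
    · obtain ⟨h₂k, h₃l⟩ := eq_corner_of_cons_eq_cons hyz.symm h
      have := (path_eq_corner_right_iff h₂ (by omega)).mp h₂k
      exact ⟨by omega, (path_eq_corner_left_iff h₃ hl).mp h₃l⟩
  · unfold seqAppend at h
    split_ifs at h with hk₁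
    · rcases eq_corner_of_adj_cons_cons hxy h with h₃l | h₁k | ⟨c, hcx, hcy, -, h₃l⟩
      · exact absurd h₃l (path_ne_corner hxz.symm hxy.symm l)
      · exact absurd h₁k (path_ne_corner hxy hyz.symm k)
      · obtain rfl : c = z := by have := eq_or_eq_or_eq_of_ne c hxy hxz hyz; tauto
        exact Or.inr ((path_eq_corner_left_iff h₃ hl).mp h₃l)
    · rcases eq_corner_of_adj_cons_cons hyz.symm h with h₃l | h₂k | ⟨c, hcz, hcy, -, h₃l⟩
      · exact Or.inr ((path_eq_corner_left_iff h₃ hl).mp h₃l)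
      · have := (path_eq_corner_right_iff h₂ (by omega)).mp h₂k
        exact Or.inl (by omega)
      · obtain rfl : c = x := by have := eq_or_eq_or_eq_of_ne c hxy hxz hyz; tauto
        exact absurd h₃l (path_ne_corner hxz.symm hxy.symm l)

theorem isInducedPathSeq_path (hxy : x ≠ y) (hxz : x ≠ z) (hyz : y ≠ z) :
    IsInducedPathSeq (sierpinskiTriangle 3 n) (path n x y z) (3 ^ n) := by
  induction n generalizing x y z with
  | zero => exact isInducedPathSeq_path_zero hxy
  | succ n ih =>
    exact isInducedPathSeq_path_succ hxy hxz hyz (ih hxz hxy hyz.symm) (ih hxy hxz hyz)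
      (ih hyz.symm hxz.symm hxy.symm)

end Path

theorem exists_isFeedbackVertexSet_two_mul_card (n : ℕ) :
    ∃ X : Finset (Vertex 3 n), IsFeedbackVertexSet (sierpinskiTriangle 3 n) X ∧
      2 * #X = 3 ^ n + 1 := by
  have hP := isInducedPathSeq_path (n := n) (x := 0) (y := 1) (z := 2) (by decide) (by decide)
    (by decide)
  set F := (Iic (3 ^ n)).image (path n 0 1 2)
  have hF : #F = 3 ^ n + 1 := by
    rw [card_image_of_injOn (by rw [coe_Iic]; exact hP.injOn), Nat.card_Iic]
  refine ⟨Fᶜ, ?_, ?_⟩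
  · rw [IsFeedbackVertexSet, coe_compl, compl_compl, coe_image, coe_Iic]
    exact hP.isAcyclic_induce
  · have := card_add_card_compl F
    have := two_mul_card_vertex 3 n
    rw [pow_succ, Nat.card_eq_fintype_card] at this
    omega

end SierpinskiTriangle

theorem stmt14 (n : Nat) :
    feedbackNumber (sierpinskiTriangle 3 n) = (3 ^ n + 1) / 2 ∧
    feedbackNumber (sierpinskiTriangle 3 n) =
      Nat.card (Quotient (triSetoid 3 n)) / 3 := by
  have hodd : 3 ^ n % 2 = 1 := Nat.odd_iff.mp (Odd.pow (by decide))
  have hcard : 2 * Nat.card (Quotient (triSetoid 3 n)) = 3 ^ n * 3 + 3 :=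
    pow_succ 3 n ▸ SierpinskiTriangle.two_mul_card_vertex 3 n
  obtain ⟨X, hX, hXcard⟩ := SierpinskiTriangle.exists_isFeedbackVertexSet_two_mul_card n
  have hτ := feedbackNumber_eq_card hX fun Y hY => by
    have := SierpinskiTriangle.pow_succ_le_of_isFeedbackVertexSet hY
    rw [pow_succ] at this
    omega
  rw [hτ]
  constructor <;> omega
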